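/- arXiv:2602.20703 — 4 statements merged into one kernel-verified Lean document; each statement's English description precedes it below -/
import Mathlib

section
/- Let A be a reduced commutative k-algebra over a field k of characteristic p > 0, and let δ be a derivation of A satisfying δ^p = α·δ for some α ∈ A. Then δ(α) = 0. -/
/-- If `A` is a reduced commutative `k`-algebra over a field `k` of characteristic `p > 0`
and `δ` is a derivation of `A` with `δ^p = α • δ` for some `α ∈ A`, then `δ α = 0`. -/
theorem pClosed_derivation_annihilates_alpha
    (p : ℕ) (hp : p.Prime) (k A : Type*) [Field k] [CharP k p]
    [CommRing A] [IsReduced A] [Algebra k A] [CharP A p]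
    (δ : Derivation k A A) (α : A)
    (hpc : ∀ a : A, (⇑δ)^[p] a = α * δ a) :
    δ α = 0 := by
  -- key: δ(δ^[p] a) = δ^[p](δ a) gives δ α * δ a = 0 for all a
  have key : ∀ a : A, δ α * δ a = 0 := by
    intro a
    have h1 : δ ((⇑δ)^[p] a) = (⇑δ)^[p] (δ a) := by
      rw [← Function.iterate_succ_apply' (⇑δ) p a, Function.iterate_succ_apply]
    rw [hpc a, hpc (δ a), Derivation.leibniz] at h1
    simp only [smul_eq_mul] at h1
    linear_combination h1
  have h2 : δ α * δ α = 0 := key α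
  have : IsNilpotent (δ α) := ⟨2, by rw [sq]; exact h2⟩
  exact this.eq_zero
end

section
/- Let A be an integral domain over a field k of characteristic p > 0, and let F be a set of derivations of A. Let A^F = {a ∈ A : δ(a) = 0 for all δ ∈ F} be the invariant subring. Then the fraction field of A^F equals the fixed field of the extensions of the derivations in F to the fraction field of A; that is, Q(A^F) = Q(A)^{F̄}, where each δ ∈ F extends uniquely to a derivation δ̄ of Q(A) by the quotient rule. -/
/-- For an integral domain `A` over a field `k` of characteristic `p > 0` and a set `F` of
derivations of `A`, the fraction field of the invariant subring `A^F` equals the fixed field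
of the (unique) extensions of the derivations in `F` to the fraction field `K = Q(A)`. -/
theorem fractionField_of_invariant_subring
    (p : ℕ) (hp : p.Prime) (k A : Type*) [Field k] [CharP k p]
    [CommRing A] [IsDomain A] [Algebra k A] [CharP A p]
    (F : Set (Derivation k A A))
    (K : Type*) [Field K] [Algebra A K] [IsFractionRing A K]
    [Algebra k K] [IsScalarTower k A K]
    (ext : Derivation k A A → Derivation k K K)
    (hext : ∀ δ ∈ F, ∀ a : A, ext δ (algebraMap A K a) = algebraMap A K (δ a)) :
    {x : K | ∃ a b : A, (∀ δ ∈ F, δ a = 0) ∧ (∀ δ ∈ F, δ b = 0) ∧ b ≠ 0 ∧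
        x = algebraMap A K a / algebraMap A K b} =
      {x : K | ∀ δ ∈ F, ext δ x = 0} := by
  have hinj : Function.Injective (algebraMap A K) := IsFractionRing.injective A K
  ext x
  simp only [Set.mem_setOf_eq]
  constructor
  · rintro ⟨a, b, ha, hb, hbne, rfl⟩ δ hδ
    have hB : algebraMap A K b ≠ 0 := fun h => hbne (hinj (by simpa using h))
    have hxb : algebraMap A K a / algebraMap A K b * algebraMap A K b = algebraMap A K a :=
      div_mul_cancel₀ _ hB
    have h1 := congrArg (ext δ) hxb
    rw [Derivation.leibniz] at h1
    rw [hext δ hδ, hb δ hδ, map_zero, smul_zero, zero_add, smul_eq_mul, hext δ hδ, ha δ hδ,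
      map_zero] at h1
    exact (mul_eq_zero.mp h1).resolve_left hB
  · intro hx
    obtain ⟨a, b, hb, hab⟩ := IsFractionRing.div_surjective (A := A) x
    have hbne : b ≠ 0 := nonZeroDivisors.ne_zero hb
    have hB : algebraMap A K b ≠ 0 := fun h => hbne (hinj (by simpa using h))
    have hp1 : p - 1 + 1 = p := Nat.succ_pred_eq_of_pos hp.pos
    have hbp : ∀ δ : Derivation k A A, δ (b ^ p) = 0 := by
      intro δ
      rw [Derivation.leibniz_pow, nsmul_eq_mul, CharP.cast_eq_zero A p, zero_mul]
    have key : algebraMap A K (a * b ^ (p - 1)) = x * algebraMap A K (b ^ p) := by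
      rw [map_mul, map_pow, map_pow, ← hab, div_mul_eq_mul_div, eq_div_iff hB,
        mul_assoc, ← pow_succ, hp1]
    refine ⟨a * b ^ (p - 1), b ^ p, ?_, fun δ _ => hbp δ, pow_ne_zero _ hbne, ?_⟩
    · intro δ hδ
      have h2 : ext δ (x * algebraMap A K (b ^ p)) = 0 := by
        rw [Derivation.leibniz, hext δ hδ, hbp δ, map_zero, smul_zero, hx δ hδ, smul_zero,
          add_zero]
      have h3 : algebraMap A K (δ (a * b ^ (p - 1))) = algebraMap A K 0 := by
        rw [map_zero, ← hext δ hδ, key, h2]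
      exact hinj h3
    · rw [map_mul, map_pow, map_pow, ← hab, div_eq_div_iff hB (pow_ne_zero p hB),
        mul_assoc, ← pow_succ, hp1]
end

section
/- Let A be a normal (integrally closed) integral domain over a field k of characteristic p > 0 and F a set of derivations of A. Then the invariant subring A^F = {a ∈ A : δ(a) = 0 for all δ ∈ F} is also a normal domain, i.e. integrally closed in its fraction field. -/
/-- If `A` is a normal (integrally closed) domain over a field `k` of characteristic `p > 0`
and `F` is a set of derivations of `A`, then the invariant subring
`A^F = {a ∈ A | δ a = 0 for all δ ∈ F}` is again a normal domain. -/
theorem invariant_subring_of_normal_is_normal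
    (p : ℕ) (hp : p.Prime) (k A : Type*) [Field k] [CharP k p]
    [CommRing A] [IsDomain A] [Algebra k A] [CharP A p] [IsIntegrallyClosed A]
    (F : Set (Derivation k A A))
    (S : Subring A) (hS : ∀ a : A, a ∈ S ↔ ∀ δ ∈ F, δ a = 0) :
    IsIntegrallyClosed S := by
  rw [isIntegrallyClosed_iff (FractionRing S)]
  intro x hx
  -- map from S to Frac(A)
  set g : S →+* FractionRing A :=
    (algebraMap A (FractionRing A)).comp S.subtype with hg
  have hginj : Function.Injective g := by
    apply Function.Injective.comp (IsFractionRing.injective A (FractionRing A))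
    exact Subtype.val_injective
  set φ : FractionRing S →+* FractionRing A := IsFractionRing.lift hginj with hφ
  have hφcomp : ∀ s : S, φ (algebraMap S (FractionRing S) s) = g s := fun s =>
    IsFractionRing.lift_algebraMap hginj s
  -- φ x is integral over A
  obtain ⟨q, hqmonic, hqeval⟩ := hx
  have hint : IsIntegral A (φ x) := by
    refine ⟨q.map (SubringClass.subtype S), hqmonic.map _, ?_⟩
    have : Polynomial.eval₂ (algebraMap A (FractionRing A)) (φ x)
        (q.map (SubringClass.subtype S)) = φ (Polynomial.eval₂ (algebraMap S (FractionRing S)) x q) := by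
      rw [Polynomial.eval₂_map, Polynomial.hom_eval₂]
      congr 1
      ext s
      exact (hφcomp s).symm
    rw [this, hqeval, map_zero]
  obtain ⟨c, hc⟩ := IsIntegrallyClosed.isIntegral_iff.mp hint
  -- write x = a / b with a b ∈ S
  obtain ⟨a, b, hb, hab⟩ := IsFractionRing.div_surjective (A := S) x
  have hbne : (b : A) ≠ 0 := by
    intro h
    exact nonZeroDivisors.ne_zero hb (Subtype.ext h)
  have hbne' : (b : S) ≠ 0 := fun h => hbne (by rw [h]; rfl)
  -- b * c = a in A
  have key : (b : A) * c = (a : A) := by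
    apply IsFractionRing.injective A (FractionRing A)
    rw [map_mul, hc]
    have : φ x = g a / g b := by
      rw [← hab, map_div₀, hφcomp, hφcomp]
    rw [this, hg]
    simp only [RingHom.coe_comp, Function.comp_apply]
    rw [mul_div_assoc']
    exact (mul_div_cancel_left₀ _ (by
      simpa using (map_ne_zero_iff _ (IsFractionRing.injective A (FractionRing A))).mpr hbne))
  -- c is killed by all derivations
  have hcS : c ∈ S := by
    rw [hS]
    intro δ hδ
    have ha0 : δ (a : A) = 0 := (hS a).mp a.2 δ hδ
    have hb0 : δ (b : A) = 0 := (hS b).mp b.2 δ hδ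
    have : (b : A) * δ c = 0 := by
      have := congrArg δ key
      rwa [Derivation.leibniz, hb0, smul_eq_mul, smul_eq_mul, mul_zero, add_zero, ha0] at this
    rcases mul_eq_zero.mp this with h | h
    · exact absurd h hbne
    · exact h
  refine ⟨⟨c, hcS⟩, ?_⟩
  -- algebraMap S Frac(S) ⟨c,_⟩ = x
  have hba : (b : S) * ⟨c, hcS⟩ = a := by
    ext
    exact key
  have hbmap : algebraMap S (FractionRing S) b ≠ 0 :=
    IsFractionRing.to_map_ne_zero_of_mem_nonZeroDivisors hb
  rw [← hab, eq_div_iff hbmap, ← map_mul, mul_comm, hba]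
end

section
/- Let k be an algebraically closed field of characteristic 5, δ = y∂_x + (x² + g)∂_y a derivation of k[[x,y]] with g ∈ I₅ (the ideal of weighted degree ≥ 5 for weights deg x = 2, deg y = 3), satisfying δ⁵ = αδ for some α ∈ k[[x,y]]. Then α ∈ I₅, i.e. α lies in the ideal generated by monomials of weighted degree at least 5. -/
/-!
`δ = y ∂ₓ + (x² + g) ∂_y` is a genuine derivation of `k[[x, y]]`, and since `g` has weighted
order `≥ 4` it raises the weighted order by at least one. From `δ x = y`, `δ y = x² + g` and the
Leibniz rule alone, `δ⁵ x = 10 x² y + 4 y g + 2 δ (x g) + δ³ g`. In characteristic 5 the first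
term vanishes and the others have weighted order `≥ 8`; as `δ⁵ x = α δ x = α y` and `y` has
weight 3, `α` has weighted order `≥ 5`.
-/

open MvPowerSeries

namespace MvPowerSeries

variable {σ R : Type*}

section WeightedOrderIdeal

variable [Semiring R] (w : σ → ℕ)

def weightedOrderIdeal (n : ℕ) : Ideal (MvPowerSeries σ R) where
  carrier := {f | (n : ℕ∞) ≤ f.weightedOrder w}
  zero_mem' := by simp
  add_mem' hf hg := (le_min hf hg).trans (min_weightedOrder_le_add w)
  smul_mem' _ _ hf := hf.trans (le_add_self.trans (le_weightedOrder_mul w))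

variable {w} {m n : ℕ} {f g : MvPowerSeries σ R}

theorem mem_weightedOrderIdeal : f ∈ weightedOrderIdeal w n ↔ (n : ℕ∞) ≤ f.weightedOrder w :=
  Iff.rfl

theorem mem_weightedOrderIdeal_iff_coeff :
    f ∈ weightedOrderIdeal w n ↔ ∀ d, coeff d f ≠ 0 → n ≤ Finsupp.weight w d := by
  refine ⟨fun h d hd => ?_, fun h => nat_le_weightedOrder w fun d hd => ?_⟩
  · exact_mod_cast h.trans (weightedOrder_le w hd)
  · by_contra hc
    exact (h d hc).not_gt hd

theorem weightedOrderIdeal_antitone : Antitone (weightedOrderIdeal (R := R) w) :=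
  fun _ _ hmn _ hf => (Nat.cast_le.mpr hmn).trans (mem_weightedOrderIdeal.mp hf)

theorem mul_mem_weightedOrderIdeal (hf : f ∈ weightedOrderIdeal w m)
    (hg : g ∈ weightedOrderIdeal w n) : f * g ∈ weightedOrderIdeal w (m + n) := by
  rw [mem_weightedOrderIdeal, Nat.cast_add]
  exact (add_le_add hf hg).trans (le_weightedOrder_mul w)

theorem X_mem_weightedOrderIdeal (i : σ) : X i ∈ weightedOrderIdeal (R := R) w (w i) := by
  rw [mem_weightedOrderIdeal, X_def]
  refine le_weightedOrder w fun d hd => coeff_monomial_ne ?_ _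
  rintro rfl
  simp [Finsupp.weight_single] at hd

theorem mem_weightedOrderIdeal_of_mul_X_mem {i : σ}
    (h : f * X i ∈ weightedOrderIdeal w (n + w i)) : f ∈ weightedOrderIdeal w n := by
  rw [mem_weightedOrderIdeal_iff_coeff] at h ⊢
  intro d hd
  have hshift : coeff (d + Finsupp.single i 1) (f * X i) = coeff d f := by
    rw [X_def, coeff_mul_monomial, if_pos le_add_self, add_tsub_cancel_right, mul_one]
  have := h _ (hshift ▸ hd)
  simp only [map_add, Finsupp.weight_single, one_smul] at this
  omega

end WeightedOrderIdeal

section PDeriv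

variable [CommSemiring R] {w : σ → ℕ} {n : ℕ} {f : MvPowerSeries σ R}

theorem pderiv_mem_weightedOrderIdeal (i : σ) (hf : f ∈ weightedOrderIdeal w n) :
    pderiv R i f ∈ weightedOrderIdeal w (n - w i) := by
  rw [mem_weightedOrderIdeal_iff_coeff] at hf ⊢
  intro d hd
  rw [coeff_pderiv] at hd
  have := hf _ (left_ne_zero_of_mul hd)
  simp only [map_add, Finsupp.weight_single, one_smul] at this
  omega

theorem eq_pderiv_of_coeff {i : σ} {D : MvPowerSeries σ R → MvPowerSeries σ R}
    (hD : ∀ f d, coeff d (D f) = (d i + 1 : ℕ) * coeff (d + Finsupp.single i 1) f) :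
    D = pderiv R i := by
  ext f d
  rw [hD, coeff_pderiv, mul_comm]
  push_cast
  rfl

end PDeriv

end MvPowerSeries

theorem Derivation.iterate_five_apply_eq_of_apply_eq {R A : Type*} [CommRing R] [CommRing A]
    [Algebra R A] (D : Derivation R A A) {x y g : A} (hx : D x = y) (hy : D y = x ^ 2 + g) :
    D^[5] x = 10 * x ^ 2 * y + (4 * y * g + 2 * D (x * g) + D (D (D g))) := by
  have hnat (n : ℕ) : D (n : A) = 0 := D.map_natCast n
  simp only [Function.iterate_succ_apply', Function.iterate_zero_apply, hx, hy, map_add,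
    Derivation.leibniz, Derivation.leibniz_pow, smul_eq_mul, nsmul_eq_mul, hnat, map_zero]
  ring

theorem Finsupp.weight_two_three (d : Fin 2 →₀ ℕ) :
    Finsupp.weight ![2, 3] d = 2 * d 0 + 3 * d 1 := by
  simp [Finsupp.weight_apply, Finsupp.sum_fintype]
  ring

section Cusp

variable {k : Type*} [CommRing k]

local notation "I" => weightedOrderIdeal (R := k) ![2, 3]

/-- `y ∂ₓ + (x² + g) ∂_y`, a perturbation of the Hamiltonian field of the cusp `3 y² = 2 x³`. -/
noncomputable def cuspDerivation (g : MvPowerSeries (Fin 2) k) :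
    Derivation k (MvPowerSeries (Fin 2) k) (MvPowerSeries (Fin 2) k) :=
  (X 1 : MvPowerSeries (Fin 2) k) • pderiv k 0 + (X 0 ^ 2 + g) • pderiv k 1

variable {g : MvPowerSeries (Fin 2) k}

theorem cuspDerivation_apply (f : MvPowerSeries (Fin 2) k) :
    cuspDerivation g f = X 1 * pderiv k 0 f + (X 0 ^ 2 + g) * pderiv k 1 f := by
  simp only [cuspDerivation, Derivation.add_apply, Derivation.smul_apply, smul_eq_mul]

theorem cuspDerivation_X_zero : cuspDerivation g (X 0) = X 1 := by
  simp [cuspDerivation_apply]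

theorem cuspDerivation_X_one : cuspDerivation g (X 1) = X 0 ^ 2 + g := by
  simp [cuspDerivation_apply]

theorem cuspDerivation_mem (hg : g ∈ I 4) {n : ℕ} {f : MvPowerSeries (Fin 2) k} (hf : f ∈ I n) :
    cuspDerivation g f ∈ I (n + 1) := by
  have hX0sq : (X 0 : MvPowerSeries (Fin 2) k) ^ 2 ∈ I 4 :=
    pow_two (X 0 : MvPowerSeries (Fin 2) k) ▸
      mul_mem_weightedOrderIdeal (X_mem_weightedOrderIdeal 0) (X_mem_weightedOrderIdeal 0)
  have hx := mul_mem_weightedOrderIdeal (X_mem_weightedOrderIdeal 1)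
    (pderiv_mem_weightedOrderIdeal 0 hf)
  have hy := mul_mem_weightedOrderIdeal (add_mem hX0sq hg) (pderiv_mem_weightedOrderIdeal 1 hf)
  rw [cuspDerivation_apply]
  refine add_mem (weightedOrderIdeal_antitone ?_ hx) (weightedOrderIdeal_antitone ?_ hy) <;>
    simp <;> omega

theorem cuspDerivation_iterate_five_X_zero_mem [CharP k 5] (hg : g ∈ I 5) :
    (cuspDerivation g)^[5] (X 0) ∈ I 8 := by
  have hg4 : g ∈ I 4 := weightedOrderIdeal_antitone (by norm_num) hg
  have ten_eq_zero : (10 : MvPowerSeries (Fin 2) k) = 0 := by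
    have h : (10 : k) = 0 := by exact_mod_cast (CharP.cast_eq_zero_iff k 5 10).mpr (by norm_num)
    rw [← map_ofNat (algebraMap k _) 10, h, map_zero]
  rw [Derivation.iterate_five_apply_eq_of_apply_eq _ cuspDerivation_X_zero cuspDerivation_X_one,
    ten_eq_zero, zero_mul, zero_mul, zero_add]
  refine add_mem (add_mem ?_ ?_) ?_
  · rw [mul_assoc]
    exact Ideal.mul_mem_left _ _ (mul_mem_weightedOrderIdeal (X_mem_weightedOrderIdeal 1) hg)
  · exact Ideal.mul_mem_left _ _
      (cuspDerivation_mem hg4 (mul_mem_weightedOrderIdeal (X_mem_weightedOrderIdeal 0) hg))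
  · exact cuspDerivation_mem hg4 (cuspDerivation_mem hg4 (cuspDerivation_mem hg4 hg))

end Cusp

theorem alpha_in_I5_general
    (k : Type*) [Field k] [CharP k 5]
    (dX dY : MvPowerSeries (Fin 2) k → MvPowerSeries (Fin 2) k)
    (hdX : ∀ (f : MvPowerSeries (Fin 2) k) (d : Fin 2 →₀ ℕ),
      coeff d (dX f) = (d 0 + 1 : ℕ) * coeff (d + Finsupp.single 0 1) f)
    (hdY : ∀ (f : MvPowerSeries (Fin 2) k) (d : Fin 2 →₀ ℕ),
      coeff d (dY f) = (d 1 + 1 : ℕ) * coeff (d + Finsupp.single 1 1) f)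
    (g : MvPowerSeries (Fin 2) k)
    (hg : ∀ d : Fin 2 →₀ ℕ, coeff d g ≠ 0 → 5 ≤ 2 * d 0 + 3 * d 1)
    (δ : MvPowerSeries (Fin 2) k → MvPowerSeries (Fin 2) k)
    (hδ : ∀ f, δ f = X 1 * dX f + ((X 0) ^ 2 + g) * dY f)
    (α : MvPowerSeries (Fin 2) k)
    (hpc : ∀ f, δ^[5] f = α * δ f) :
    ∀ d : Fin 2 →₀ ℕ, coeff d α ≠ 0 → 5 ≤ 2 * d 0 + 3 * d 1 := by
  obtain rfl : δ = cuspDerivation g := by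
    funext f
    rw [hδ, cuspDerivation_apply, eq_pderiv_of_coeff hdX, eq_pderiv_of_coeff hdY]
  have hg : g ∈ weightedOrderIdeal ![2, 3] 5 := by
    simpa only [mem_weightedOrderIdeal_iff_coeff, Finsupp.weight_two_three] using hg
  have hαX : α * X 1 ∈ weightedOrderIdeal ![2, 3] (5 + 3) := by
    rw [← cuspDerivation_X_zero (g := g), ← hpc]
    exact cuspDerivation_iterate_five_X_zero_mem hg
  simpa only [mem_weightedOrderIdeal_iff_coeff, Finsupp.weight_two_three] using
    mem_weightedOrderIdeal_of_mul_X_mem hαX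

/-- Let `δ = y ∂_x + (x² + g) ∂_y` be a derivation of `k[[x,y]]` (char `k = 5`, `k`
algebraically closed) with `g` of weighted degree `≥ 5` (weights `deg x = 2`, `deg y = 3`),
and suppose `δ⁵ = α δ`. Then `α` has weighted degree `≥ 5`, i.e. `α ∈ I₅`. -/
theorem alpha_in_I5
    (k : Type*) [Field k] [IsAlgClosed k] [CharP k 5]
    (dX dY : MvPowerSeries (Fin 2) k → MvPowerSeries (Fin 2) k)
    (hdX : ∀ (f : MvPowerSeries (Fin 2) k) (d : Fin 2 →₀ ℕ),
      coeff d (dX f) = (d 0 + 1 : ℕ) * coeff (d + Finsupp.single 0 1) f)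
    (hdY : ∀ (f : MvPowerSeries (Fin 2) k) (d : Fin 2 →₀ ℕ),
      coeff d (dY f) = (d 1 + 1 : ℕ) * coeff (d + Finsupp.single 1 1) f)
    (g : MvPowerSeries (Fin 2) k)
    (hg : ∀ d : Fin 2 →₀ ℕ, coeff d g ≠ 0 → 5 ≤ 2 * d 0 + 3 * d 1)
    (δ : MvPowerSeries (Fin 2) k → MvPowerSeries (Fin 2) k)
    (hδ : ∀ f, δ f = X 1 * dX f + ((X 0) ^ 2 + g) * dY f)
    (α : MvPowerSeries (Fin 2) k)
    (hpc : ∀ f, δ^[5] f = α * δ f) :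
    ∀ d : Fin 2 →₀ ℕ, coeff d α ≠ 0 → 5 ≤ 2 * d 0 + 3 * d 1 :=
  alpha_in_I5_general k dX dY hdX hdY g hg δ hδ α hpc
end
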